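/- arXiv:2605.16195 — 6 statements merged into one kernel-verified Lean document; each statement's English description precedes it below -/
import Mathlib

section
/- Let B be an L·N × L·N complex block matrix with blocks B_{mn} ∈ ℂ^{N×N}, and let C ∈ ℂ^{L×L} be the matrix with entries C_{mn} = ‖B_{mn}‖ (spectral norms of the blocks). Then the spectral norm of B is at most the spectral norm of C: ‖B‖ ≤ ‖C‖. -/
/-! Split `x` into blocks `x_j` and put `ξ_j = ‖x_j‖`. The `i`-th block of `B x` is
`∑ j, B_ij x_j`, of norm at most `∑ j, ‖B_ij‖ ξ_j = (C ξ)_i`, so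
`‖B x‖ ≤ ‖C ξ‖ ≤ ‖C‖ ‖ξ‖ = ‖C‖ ‖x‖`. -/

open scoped Matrix.Norms.L2Operator

namespace EuclideanSpace

variable {𝕜 ι n : Type*} [RCLike 𝕜] [Fintype ι] [Fintype n]

def block (x : EuclideanSpace 𝕜 (ι × n)) (i : ι) : EuclideanSpace 𝕜 n :=
  WithLp.toLp 2 fun j => x (i, j)

noncomputable def blockNorms (x : EuclideanSpace 𝕜 (ι × n)) : EuclideanSpace ℝ ι :=
  WithLp.toLp 2 fun i => ‖x.block i‖

theorem norm_sq_eq_sum_norm_block_sq (x : EuclideanSpace 𝕜 (ι × n)) :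
    ‖x‖ ^ 2 = ∑ i, ‖x.block i‖ ^ 2 := by
  simp only [norm_sq_eq, Fintype.sum_prod_type]
  rfl

theorem norm_blockNorms (x : EuclideanSpace 𝕜 (ι × n)) : ‖x.blockNorms‖ = ‖x‖ := by
  rw [← sq_eq_sq₀ (norm_nonneg _) (norm_nonneg _), norm_sq_eq_sum_norm_block_sq, norm_sq_eq]
  simp [blockNorms]

theorem norm_le_of_norm_block_le {x : EuclideanSpace 𝕜 (ι × n)} {ξ : EuclideanSpace ℝ ι}
    (h : ∀ i, ‖x.block i‖ ≤ ξ i) : ‖x‖ ≤ ‖ξ‖ := by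
  rw [← sq_le_sq₀ (norm_nonneg _) (norm_nonneg _), norm_sq_eq_sum_norm_block_sq, norm_sq_eq]
  gcongr with i
  exact (h i).trans (Real.le_norm_self _)

end EuclideanSpace

namespace Matrix

open EuclideanSpace

variable {𝕜 ι κ m n : Type*} [RCLike 𝕜] [Fintype κ] [Fintype n]

theorem block_comp_mulVec (B : ι → κ → Matrix m n 𝕜) (x : EuclideanSpace 𝕜 (κ × n)) (i : ι) :
    ((EuclideanSpace.equiv _ 𝕜).symm (comp ι κ m n 𝕜 B *ᵥ x)).block i =
      ∑ j, (EuclideanSpace.equiv m 𝕜).symm (B i j *ᵥ x.block j) := by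
  ext k
  simp only [block, PiLp.continuousLinearEquiv_symm_apply, mulVec, dotProduct,
    Fintype.sum_prod_type, WithLp.ofLp_sum, Finset.sum_apply]
  rfl

variable [Fintype m]

theorem l2_opNorm_le_of_mulVec_le [DecidableEq n] {A : Matrix m n 𝕜} {c : ℝ} (hc : 0 ≤ c)
    (h : ∀ x : EuclideanSpace 𝕜 n, ‖(EuclideanSpace.equiv m 𝕜).symm (A *ᵥ x)‖ ≤ c * ‖x‖) :
    ‖A‖ ≤ c :=
  ContinuousLinearMap.opNorm_le_bound _ hc h

theorem norm_block_comp_mulVec_le [DecidableEq n] (B : ι → κ → Matrix m n 𝕜)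
    (x : EuclideanSpace 𝕜 (κ × n)) (i : ι) :
    ‖((EuclideanSpace.equiv _ 𝕜).symm (comp ι κ m n 𝕜 B *ᵥ x)).block i‖ ≤
      ∑ j, ‖B i j‖ * ‖x.block j‖ := by
  rw [block_comp_mulVec]
  exact (norm_sum_le _ _).trans (Finset.sum_le_sum fun j _ => l2_opNorm_mulVec _ _)

theorem l2_opNorm_comp_le [Fintype ι] [DecidableEq κ] [DecidableEq n] {B : ι → κ → Matrix m n 𝕜}
    {C : Matrix ι κ ℝ} (hC : ∀ i j, ‖B i j‖ ≤ C i j) : ‖comp ι κ m n 𝕜 B‖ ≤ ‖C‖ := by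
  refine l2_opNorm_le_of_mulVec_le (norm_nonneg C) fun x => ?_
  calc ‖(EuclideanSpace.equiv _ 𝕜).symm (comp ι κ m n 𝕜 B *ᵥ x)‖
      ≤ ‖(EuclideanSpace.equiv ι ℝ).symm (C *ᵥ x.blockNorms)‖ := by
        refine norm_le_of_norm_block_le fun i => (norm_block_comp_mulVec_le B x i).trans ?_
        exact Finset.sum_le_sum fun j _ => mul_le_mul_of_nonneg_right (hC i j) (norm_nonneg _)
    _ ≤ ‖C‖ * ‖x.blockNorms‖ := l2_opNorm_mulVec C _
    _ = ‖C‖ * ‖x‖ := by rw [norm_blockNorms]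

end Matrix

/-- **Spectral norm bound for block matrices.**
If `B` is an `L·N × L·N` complex block matrix with blocks `B m n : ℂ^{N×N}` and
`C` is the `L × L` real matrix with entries `C m n = ‖B m n‖` (spectral norms of
the blocks), then the spectral norm of the block matrix is at most `‖C‖`. -/
theorem block_matrix_spectral_norm_le
    (L N : ℕ) (B : Fin L → Fin L → Matrix (Fin N) (Fin N) ℂ)
    (C : Matrix (Fin L) (Fin L) ℝ) (hC : ∀ m n, C m n = ‖B m n‖) :
    ‖Matrix.of (fun (p q : Fin L × Fin N) => B p.1 q.1 p.2 q.2)‖ ≤ ‖C‖ :=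
  Matrix.l2_opNorm_comp_le fun m n => (hC m n).ge
end

section
/- Let A ∈ ℂ^{N×N} with ‖A‖ ≤ a for some a > 0, let t ≥ 0, M = ⌈ta⌉, and x ∈ ℂ^N. Then Σ_{m=0}^{M−1} ‖e^{(tm/M)A} x‖² ≤ e² (M/t) ∫₀ᵗ ‖e^{sA} x‖² ds (for t > 0). -/
/-!
On a cell `[c, c + t/M]` of the uniform grid the step `t/M` is at most `1/‖A‖`, so
`e^{cA} = e^{(c-s)A} e^{sA}` with `‖e^{(c-s)A}‖ ≤ e^{|c-s|‖A‖} ≤ e` shows that the value of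
`‖e^{sA}x‖²` at the left end of the cell is at most `e²` times its value anywhere in the cell.
The left Riemann sum `(t/M) Σ_m ‖e^{(tm/M)A}x‖²` is therefore at most `e² ∫₀ᵗ ‖e^{sA}x‖² ds`.
-/

open scoped Matrix.Norms.L2Operator
open NormedSpace Matrix

theorem mul_le_mul_integral_of_le_mul {f : ℝ → ℝ} {c δ K : ℝ} (hδ : 0 ≤ δ)
    (hf : IntervalIntegrable f MeasureTheory.volume c (c + δ))
    (hK : ∀ s ∈ Set.Icc c (c + δ), f c ≤ K * f s) :
    f c * δ ≤ K * ∫ s in c..c + δ, f s := by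
  have h := intervalIntegral.integral_mono_on (by linarith) intervalIntegrable_const
    (hf.const_mul K) hK
  rwa [intervalIntegral.integral_const, add_sub_cancel_left, smul_eq_mul, mul_comm,
    intervalIntegral.integral_const_mul] at h

theorem sum_mul_le_mul_integral_of_le_mul {f : ℝ → ℝ} {δ K : ℝ} (hf : Continuous f)
    (hδ : 0 ≤ δ) (hK : ∀ c, ∀ s ∈ Set.Icc c (c + δ), f c ≤ K * f s) (M : ℕ) :
    (∑ m ∈ Finset.range M, f (m * δ)) * δ ≤ K * ∫ s in (0 : ℝ)..M * δ, f s := by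
  have hcells := intervalIntegral.sum_integral_adjacent_intervals (a := fun m : ℕ ↦ m * δ)
    (μ := MeasureTheory.volume) (n := M) fun k _ ↦ hf.intervalIntegrable _ _
  simp only [Nat.cast_zero, zero_mul] at hcells
  rw [← hcells, Finset.sum_mul, Finset.mul_sum]
  refine Finset.sum_le_sum fun m _ ↦ ?_
  have hnext : ((m + 1 : ℕ) : ℝ) * δ = m * δ + δ := by push_cast; ring
  rw [hnext]
  exact mul_le_mul_integral_of_le_mul hδ (hf.intervalIntegrable _ _) (hK _)

theorem NormedSpace.norm_exp_le_exp_norm {𝕂 𝔸 : Type*} [RCLike 𝕂] [NormedRing 𝔸]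
    [NormedAlgebra 𝕂 𝔸] (h1 : ‖(1 : 𝔸)‖ ≤ 1) (x : 𝔸) : ‖exp x‖ ≤ Real.exp ‖x‖ := by
  rw [exp_eq_tsum 𝕂, Real.exp_eq_exp_ℝ, exp_eq_tsum ℝ]
  refine (norm_tsum_le_tsum_norm (norm_expSeries_summable' x)).trans <|
    Summable.tsum_le_tsum (fun k ↦ ?_) (norm_expSeries_summable' x)
      (norm_expSeries_summable' (𝕂 := ℝ) ‖x‖).of_norm
  have hpow : ‖x ^ k‖ ≤ ‖x‖ ^ k := by
    rcases k with _ | k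
    · simpa using h1
    · exact norm_pow_le' x k.succ_pos
  rw [norm_smul, norm_inv, RCLike.norm_natCast, smul_eq_mul]
  gcongr

namespace Matrix

variable {𝕜 : Type*} [RCLike 𝕜] {n p : Type*} [Fintype n] [DecidableEq n]

theorem l2_opNorm_one_le : ‖(1 : Matrix n n 𝕜)‖ ≤ 1 := by
  rw [cstar_norm_def, map_one]
  exact ContinuousLinearMap.norm_id_le

theorem l2_opNorm_exp_le (A : Matrix n n 𝕜) : ‖exp A‖ ≤ Real.exp ‖A‖ :=
  NormedSpace.norm_exp_le_exp_norm (𝕂 := 𝕜) l2_opNorm_one_le A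

theorem continuous_exp_smul_mul (A : Matrix n n 𝕜) (x : Matrix n p 𝕜) :
    Continuous fun s : ℝ ↦ exp (s • A) * x :=
  letI : NormedAlgebra ℚ (Matrix n n 𝕜) := NormedAlgebra.restrictScalars ℚ 𝕜 _
  (exp_continuous.comp (continuous_id.smul continuous_const)).matrix_mul continuous_const

variable [Fintype p] [DecidableEq p]

theorem l2_opNorm_exp_smul_mul_le (A : Matrix n n 𝕜) (x : Matrix n p 𝕜) (c s : ℝ) :
    ‖exp (c • A) * x‖ ≤ Real.exp (|c - s| * ‖A‖) * ‖exp (s • A) * x‖ := by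
  have hsplit : exp (c • A) = exp ((c - s) • A) * exp (s • A) := by
    rw [← exp_add_of_commute _ _ (((Commute.refl A).smul_left _).smul_right _), ← add_smul,
      sub_add_cancel]
  have hnorm : ‖(c - s) • A‖ = |c - s| * ‖A‖ := by
    rw [RCLike.real_smul_eq_coe_smul (K := 𝕜), norm_smul, RCLike.norm_ofReal]
  calc ‖exp (c • A) * x‖ ≤ ‖exp ((c - s) • A)‖ * ‖exp (s • A) * x‖ := by
        rw [hsplit, Matrix.mul_assoc]
        exact l2_opNorm_mul _ _
    _ ≤ Real.exp (|c - s| * ‖A‖) * ‖exp (s • A) * x‖ := by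
        gcongr
        exact hnorm ▸ l2_opNorm_exp_le _

theorem sq_l2_opNorm_exp_smul_mul_le {A : Matrix n n 𝕜} (x : Matrix n p 𝕜) {c s : ℝ}
    (hcs : |c - s| * ‖A‖ ≤ 1) :
    ‖exp (c • A) * x‖ ^ 2 ≤ Real.exp 1 ^ 2 * ‖exp (s • A) * x‖ ^ 2 := by
  rw [← mul_pow]
  gcongr
  exact (l2_opNorm_exp_smul_mul_le A x c s).trans (by gcongr)

end Matrix

theorem history_state_norm_bound_general
    (N : ℕ) (A : Matrix (Fin N) (Fin N) ℂ) (a t : ℝ)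
    (hA : ‖A‖ ≤ a)
    (M : ℕ) (hM : M = ⌈t * a⌉₊)
    (x : Matrix (Fin N) (Fin 1) ℂ) :
    ∑ m ∈ Finset.range M, ‖exp ((t * m / M) • A) * x‖ ^ 2 ≤
      Real.exp 1 ^ 2 * (M / t) * ∫ s in (0:ℝ)..t, ‖exp (s • A) * x‖ ^ 2 := by
  rcases M.eq_zero_or_pos with rfl | hM0
  · simp
  have ht : 0 < t := pos_of_mul_pos_left (Nat.ceil_pos.mp (hM ▸ hM0)) ((norm_nonneg A).trans hA)
  have hMr : (0 : ℝ) < M := Nat.cast_pos.mpr hM0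
  have hstep : t / M * ‖A‖ ≤ 1 := by
    calc t / M * ‖A‖ ≤ t / M * a := by gcongr
      _ ≤ 1 := by rw [div_mul_eq_mul_div, div_le_one hMr, hM]; exact Nat.le_ceil _
  have hcell : ∀ c, ∀ s ∈ Set.Icc c (c + t / M),
      ‖exp (c • A) * x‖ ^ 2 ≤ Real.exp 1 ^ 2 * ‖exp (s • A) * x‖ ^ 2 := fun c s hs ↦
    sq_l2_opNorm_exp_smul_mul_le x <| by
      rw [abs_sub_comm, abs_of_nonneg (by linarith [hs.1])]
      exact (mul_le_mul_of_nonneg_right (by linarith [hs.2]) (norm_nonneg A)).trans hstep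
  have hriemann := sum_mul_le_mul_integral_of_le_mul (f := fun s ↦ ‖exp (s • A) * x‖ ^ 2)
    ((continuous_exp_smul_mul A x).norm.pow 2) (by positivity) hcell M
  rw [mul_div_cancel₀ t hMr.ne'] at hriemann
  have hunit : t / M * (M / t) = 1 := by field_simp
  calc ∑ m ∈ Finset.range M, ‖exp ((t * m / M) • A) * x‖ ^ 2
      = (∑ m ∈ Finset.range M, ‖exp ((m * (t / M)) • A) * x‖ ^ 2) * (t / M) * (M / t) := by
        rw [mul_assoc, hunit, mul_one]
        exact Finset.sum_congr rfl fun m _ ↦ by rw [mul_comm t, mul_div_assoc]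
    _ ≤ Real.exp 1 ^ 2 * (∫ s in (0:ℝ)..t, ‖exp (s • A) * x‖ ^ 2) * (M / t) := by gcongr
    _ = Real.exp 1 ^ 2 * (M / t) * ∫ s in (0:ℝ)..t, ‖exp (s • A) * x‖ ^ 2 := by ring

/-- **Norm of the history state.**
For `A ∈ ℂ^{N×N}` with `‖A‖ ≤ a`, `a > 0`, `t > 0`, `M = ⌈t·a⌉`, and a vector
`x ∈ ℂ^N` (viewed as a column matrix, so that the spectral norm is its Euclidean
norm), we have `Σ_{m=0}^{M−1} ‖e^{(tm/M)A} x‖² ≤ e² (M/t) ∫₀ᵗ ‖e^{sA} x‖² ds`. -/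
theorem history_state_norm_bound
    (N : ℕ) (A : Matrix (Fin N) (Fin N) ℂ) (a t : ℝ)
    (ha : 0 < a) (hA : ‖A‖ ≤ a) (ht : 0 < t)
    (M : ℕ) (hM : M = ⌈t * a⌉₊)
    (x : Matrix (Fin N) (Fin 1) ℂ) :
    ∑ m ∈ Finset.range M, ‖exp ((t * m / M) • A) * x‖ ^ 2 ≤
      Real.exp 1 ^ 2 * (M / t) * ∫ s in (0:ℝ)..t, ‖exp (s • A) * x‖ ^ 2 :=
  history_state_norm_bound_general N A a t hA M hM x
end

section
/- Let A ∈ ℂ^{N×N} with ‖A‖ ≤ a, t > 0, M a positive integer with M ≥ ta (so that h = t/M satisfies ah ≤ 1). Then Σ_{m=1}^{M} ‖e^{mhA}‖ ≤ (e/h) ∫₀ᵗ ‖e^{sA}‖ ds. -/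
open scoped Matrix.Norms.L2Operator
open NormedSpace Matrix

/-!
Since `e^{uA} = e^{(u-s)A} e^{sA}` and `‖e^{(u-s)A}‖ ≤ e^{(u-s)‖A‖} ≤ e` for `s ≤ u ≤ s + h`,
each term `‖e^{mhA}‖` is at most `e ‖e^{sA}‖` for every `s ∈ [(m-1)h, mh]`. Integrating over that
interval and summing over `m` bounds the right Riemann sum `h Σ ‖e^{mhA}‖` by `e ∫₀ᵗ ‖e^{sA}‖ ds`.
-/

theorem CStarRing.norm_one_le {E : Type*} [NormedRing E] [StarRing E] [CStarRing E] :
    ‖(1 : E)‖ ≤ 1 := by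
  rcases subsingleton_or_nontrivial E with hE | hE
  · simp [Subsingleton.elim (1 : E) 0]
  · exact CStarRing.norm_one.le

namespace NormedSpace

variable {𝔸 : Type*} [NormedRing 𝔸] [NormedAlgebra ℝ 𝔸]

theorem norm_exp_le_exp_norm_s4 (h1 : ‖(1 : 𝔸)‖ ≤ 1) (x : 𝔸) : ‖exp x‖ ≤ Real.exp ‖x‖ := by
  rw [exp_eq_tsum ℝ, Real.exp_eq_exp_ℝ, exp_eq_tsum_div]
  refine (norm_tsum_le_tsum_norm (norm_expSeries_summable' x)).trans <|
    (norm_expSeries_summable' x).tsum_le_tsum (fun n => ?_) (Real.summable_pow_div_factorial ‖x‖)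
  rw [norm_smul, div_eq_inv_mul, norm_inv, Real.norm_natCast]
  gcongr
  rcases n with _ | n
  · simpa using h1
  · exact norm_pow_le' x n.succ_pos

variable [CompleteSpace 𝔸]

theorem continuous_exp_smul (A : 𝔸) : Continuous fun s : ℝ => exp (s • A) :=
  letI : NormedAlgebra ℚ 𝔸 := NormedAlgebra.restrictScalars ℚ ℝ 𝔸
  exp_continuous.comp (continuous_id.smul continuous_const)

theorem norm_exp_smul_le (h1 : ‖(1 : 𝔸)‖ ≤ 1) (A : 𝔸) (s u : ℝ) :
    ‖exp (u • A)‖ ≤ Real.exp (|u - s| * ‖A‖) * ‖exp (s • A)‖ := by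
  let : NormedAlgebra ℚ 𝔸 := NormedAlgebra.restrictScalars ℚ ℝ 𝔸
  have hsplit : exp (u • A) = exp ((u - s) • A) * exp (s • A) := by
    rw [← exp_add_of_commute (((Commute.refl A).smul_left _).smul_right _), ← add_smul,
      sub_add_cancel]
  calc ‖exp (u • A)‖ ≤ ‖exp ((u - s) • A)‖ * ‖exp (s • A)‖ := hsplit ▸ norm_mul_le _ _
    _ ≤ Real.exp (|u - s| * ‖A‖) * ‖exp (s • A)‖ := by
      gcongr
      simpa [norm_smul] using norm_exp_le_exp_norm_s4 h1 ((u - s) • A)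

end NormedSpace

open intervalIntegral in
theorem sub_mul_le_integral_of_le_mul {g : ℝ → ℝ} {C s u : ℝ} (hsu : s ≤ u)
    (hg : IntervalIntegrable g MeasureTheory.volume s u)
    (hbound : ∀ x ∈ Set.Icc s u, g u ≤ C * g x) :
    (u - s) * g u ≤ C * ∫ x in s..u, g x :=
  calc (u - s) * g u = ∫ _ in s..u, g u := by simp
    _ ≤ ∫ x in s..u, C * g x :=
      integral_mono_on hsu intervalIntegrable_const (hg.const_mul C) hbound
    _ = C * ∫ x in s..u, g x := integral_const_mul C g

theorem mul_sum_Icc_le_integral_of_le_mul {g : ℝ → ℝ} {C h : ℝ} (hg : Continuous g)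
    (hh : 0 ≤ h) (hbound : ∀ s u, s ≤ u → u ≤ s + h → g u ≤ C * g s) (M : ℕ) :
    h * ∑ m ∈ Finset.Icc 1 M, g (m * h) ≤ C * ∫ s in (0 : ℝ)..M * h, g s := by
  induction M with
  | zero => simp
  | succ M ih =>
    have hstep : h * g ((M + 1 : ℕ) * h) ≤ C * ∫ s in (M * h : ℝ)..(M + 1 : ℕ) * h, g s := by
      have := sub_mul_le_integral_of_le_mul (C := C) (s := M * h) (u := (M + 1 : ℕ) * h)
        (by push_cast; nlinarith) (hg.intervalIntegrable _ _)
        (fun x hx => hbound x _ hx.2 (by push_cast at hx ⊢; linarith [hx.1]))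
      push_cast at this ⊢
      simpa [add_mul] using this
    rw [Finset.sum_Icc_succ_top (by omega), mul_add,
      ← intervalIntegral.integral_add_adjacent_intervals (hg.intervalIntegrable 0 (M * h))
        (hg.intervalIntegrable _ _), mul_add]
    exact add_le_add ih hstep

/-- **Sum of norms of matrix exponentials bounded by an integral.**
For `A ∈ ℂ^{N×N}` with `‖A‖ ≤ a`, `t > 0` and a positive integer `M ≥ t·a`
(so `h = t/M` satisfies `a·h ≤ 1`), we have
`Σ_{m=1}^{M} ‖e^{mhA}‖ ≤ (e/h) ∫₀ᵗ ‖e^{sA}‖ ds`. -/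
theorem sum_exp_norm_le_integral
    (N : ℕ) (A : Matrix (Fin N) (Fin N) ℂ) (a t : ℝ)
    (hA : ‖A‖ ≤ a) (ht : 0 < t)
    (M : ℕ) (hM : 0 < M) (hMta : t * a ≤ M) (h : ℝ) (hh : h = t / M) :
    ∑ m ∈ Finset.Icc 1 M, ‖exp ((m * h) • A)‖ ≤
      (Real.exp 1 / h) * ∫ s in (0:ℝ)..t, ‖exp (s • A)‖ := by
  have hM0 : (0 : ℝ) < M := by exact_mod_cast hM
  have hh0 : 0 < h := hh ▸ div_pos ht hM0
  have hMh : (M : ℝ) * h = t := by rw [hh]; field_simp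
  have hah : a * h ≤ 1 := by rwa [hh, mul_div_assoc', div_le_one hM0, mul_comm]
  have hstep : ∀ s u : ℝ, s ≤ u → u ≤ s + h → ‖exp (u • A)‖ ≤ Real.exp 1 * ‖exp (s • A)‖ :=
    fun s u hsu hus => (norm_exp_smul_le CStarRing.norm_one_le A s u).trans <| by
      gcongr
      rw [abs_of_nonneg (sub_nonneg.2 hsu)]
      nlinarith [norm_nonneg A]
  have hsum := mul_sum_Icc_le_integral_of_le_mul (continuous_exp_smul A).norm hh0.le hstep M
  rw [div_mul_eq_mul_div, le_div_iff₀ hh0, mul_comm _ h, ← hMh]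
  exact hsum
end

section
/- Let A ∈ ℂ^{N×N}, h > 0 with ‖A‖h ≤ 1, and let V = Σ_{k=0}^{K} (hA)^k/k! be the order-K Taylor truncation of e^{hA}. Then for every positive integer m, ‖V^m − e^{mhA}‖ ≤ 2e·m·e^{m‖δ‖}·max_{s∈[0,mh]}‖e^{sA}‖·‖δ‖, where δ = V − e^{hA} satisfies ‖δ‖ ≤ e/(K+1)!. -/
/-!
Write `V = E + δ` with `E = e^{hA}`. Since `δ` is a polynomial in `hA` minus `e^{hA}`, it commutes
with `E`, so the binomial theorem gives `V^m - E^m = ∑_{i ≥ 1} C(m,i) δ^i E^{m-i}`. Every power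
`E^j = e^{jhA}` with `j ≤ m` is bounded by the maximum `M` of `‖e^{sA}‖` on `[0, mh]`, whence
`‖V^m - E^m‖ ≤ ((1 + ‖δ‖)^m - 1) M ≤ m ‖δ‖ e^{m‖δ‖} M`. The bound on `‖δ‖` compares the tail
of the exponential series with `‖hA‖^{K+1}/(K+1)!` times the full series of `e^{‖hA‖}`.
-/

open scoped Matrix.Norms.L2Operator
open NormedSpace Matrix
open Finset Nat

theorem factorial_mul_factorial_le_factorial_add (i j : ℕ) : i ! * j ! ≤ (i + j)! :=
  Nat.le_of_dvd (factorial_pos _) (factorial_mul_factorial_dvd_factorial_add i j)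

theorem norm_exp_sub_sum_range_le {𝕂 𝔸 : Type*} [RCLike 𝕂] [NormedRing 𝔸] [NormedAlgebra 𝕂 𝔸]
    [CompleteSpace 𝔸] (x : 𝔸) (n : ℕ) :
    ‖exp x - ∑ k ∈ range (n + 1), (k !⁻¹ : 𝕂) • x ^ k‖ ≤
      ‖x‖ ^ (n + 1) / (n + 1)! * Real.exp ‖x‖ := by
  have htail : exp x - ∑ k ∈ range (n + 1), (k !⁻¹ : 𝕂) • x ^ k =
      ∑' k, ((k + (n + 1))!⁻¹ : 𝕂) • x ^ (k + (n + 1)) := by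
    rw [← (exp_series_hasSum_exp' (𝕂 := 𝕂) x).tsum_eq,
      ← (expSeries_summable' (𝕂 := 𝕂) x).sum_add_tsum_nat_add (n + 1), add_sub_cancel_left]
  have hexp : HasSum (fun k => ‖x‖ ^ k / k !) (Real.exp ‖x‖) := by
    rw [Real.exp_eq_exp_ℝ]; exact expSeries_div_hasSum_exp ‖x‖
  rw [htail]
  refine tsum_of_norm_bounded (hexp.mul_left (‖x‖ ^ (n + 1) / (n + 1)!)) fun k => ?_
  have hfac : ((n + 1)! * k ! : ℝ) ≤ (k + (n + 1))! := by
    rw [add_comm k]; exact_mod_cast factorial_mul_factorial_le_factorial_add _ _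
  calc ‖((k + (n + 1))!⁻¹ : 𝕂) • x ^ (k + (n + 1))‖
      ≤ ‖x‖ ^ (k + (n + 1)) / (k + (n + 1))! := by
        rw [norm_smul, norm_inv, RCLike.norm_natCast, inv_mul_eq_div]
        gcongr
        exact norm_pow_le' x (succ_pos _)
    _ ≤ ‖x‖ ^ (k + (n + 1)) / ((n + 1)! * k !) := by gcongr
    _ = ‖x‖ ^ (n + 1) / (n + 1)! * (‖x‖ ^ k / k !) := by rw [pow_add]; field_simp

theorem norm_add_pow_sub_pow_le {R : Type*} [NormedRing R] {a b : R} (hab : Commute a b)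
    {m : ℕ} {M : ℝ} (hb : ∀ j < m, ‖b ^ j‖ ≤ M) :
    ‖(a + b) ^ m - b ^ m‖ ≤ ((1 + ‖a‖) ^ m - 1) * M := by
  have hexpand : (a + b) ^ m - b ^ m =
      ∑ i ∈ range m, a ^ (i + 1) * b ^ (m - (i + 1)) * (m.choose (i + 1) : R) := by
    rw [hab.add_pow, sum_range_succ', pow_zero, one_mul, Nat.sub_zero, choose_zero_right,
      Nat.cast_one, mul_one, add_sub_cancel_right]
  have hreal : (1 + ‖a‖) ^ m - 1 = ∑ i ∈ range m, ‖a‖ ^ (i + 1) * (m.choose (i + 1) : ℝ) := by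
    rw [add_comm, add_pow, sum_range_succ']
    simp
  rw [hexpand, hreal, sum_mul]
  refine norm_sum_le_of_le _ fun i hi => ?_
  calc ‖a ^ (i + 1) * b ^ (m - (i + 1)) * (m.choose (i + 1) : R)‖
      = ‖(m.choose (i + 1)) • (a ^ (i + 1) * b ^ (m - (i + 1)))‖ := by rw [nsmul_eq_mul']
    _ ≤ m.choose (i + 1) * (‖a‖ ^ (i + 1) * M) := by
        refine norm_nsmul_le.trans (mul_le_mul_of_nonneg_left ?_ (Nat.cast_nonneg _))
        refine (norm_mul_le _ _).trans (mul_le_mul (norm_pow_le' a (succ_pos i)) ?_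
          (norm_nonneg _) (by positivity))
        exact hb _ (Nat.sub_lt (by simp at hi; omega) (succ_pos i))
    _ = ‖a‖ ^ (i + 1) * m.choose (i + 1) * M := by ring

theorem one_add_pow_sub_one_le {x : ℝ} (hx : 0 ≤ x) (m : ℕ) :
    (1 + x) ^ m - 1 ≤ m * x * Real.exp (m * x) := by
  have hpow : (1 + x) ^ m ≤ Real.exp (m * x) := by
    rw [Real.exp_nat_mul]
    gcongr
    linarith [Real.add_one_le_exp x]
  have hexp : Real.exp (m * x) - 1 ≤ m * x * Real.exp (m * x) := by
    have hinv : Real.exp (-(m * x)) * Real.exp (m * x) = 1 := by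
      rw [← Real.exp_add, neg_add_cancel, Real.exp_zero]
    nlinarith [Real.one_sub_le_exp_neg (m * x), Real.exp_pos (m * x)]
  linarith

/-- **Error bound for powers of a truncated Taylor series of the matrix exponential.**
Let `A ∈ ℂ^{N×N}`, `h > 0` with `‖A‖·h ≤ 1`, and `V = Σ_{k=0}^{K} (hA)^k/k!` the
order-`K` Taylor truncation of `e^{hA}`, with remainder `δ = V − e^{hA}`.  Then
`‖δ‖ ≤ e/(K+1)!`, and for every positive integer `m`,
`‖V^m − e^{mhA}‖ ≤ 2e·m·e^{m‖δ‖}·(max_{s∈[0,mh]} ‖e^{sA}‖)·‖δ‖`. -/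
theorem truncated_taylor_power_error
    (N : ℕ) (A : Matrix (Fin N) (Fin N) ℂ) (h : ℝ) (hh : 0 < h)
    (hAh : ‖A‖ * h ≤ 1) (K : ℕ)
    (V δ : Matrix (Fin N) (Fin N) ℂ)
    (hV : V = ∑ k ∈ Finset.range (K + 1), ((k.factorial : ℂ))⁻¹ • (h • A) ^ k)
    (hδ : δ = V - exp (h • A)) :
    ‖δ‖ ≤ Real.exp 1 / (K + 1).factorial ∧
      ∀ m : ℕ, 0 < m →
        ‖V ^ m - exp ((m * h) • A)‖ ≤
          2 * Real.exp 1 * m * Real.exp (m * ‖δ‖) *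
            sSup ((fun s => ‖exp (s • A)‖) '' Set.Icc 0 (m * h)) * ‖δ‖ := by
  have hhA : ‖h • A‖ ≤ 1 := by rwa [norm_smul, Real.norm_of_nonneg hh.le, mul_comm]
  constructor
  · calc ‖δ‖ ≤ ‖h • A‖ ^ (K + 1) / (K + 1)! * Real.exp ‖h • A‖ := by
          rw [hδ, hV, norm_sub_rev]; exact norm_exp_sub_sum_range_le (h • A) K
      _ ≤ 1 / (K + 1)! * Real.exp 1 := by gcongr; exact pow_le_one₀ (norm_nonneg _) hhA
      _ = Real.exp 1 / (K + 1)! := by ring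
  intro m hm
  set M := sSup ((fun s => ‖exp (s • A)‖) '' Set.Icc 0 (m * h))
  have hpow : ∀ j ≤ m, ‖exp (h • A) ^ j‖ ≤ M := by
    intro j hj
    rw [← Matrix.exp_nsmul, ← Nat.cast_smul_eq_nsmul ℝ, smul_smul]
    have hcont : Continuous fun s : ℝ => ‖exp (s • A)‖ :=
      ((continuous_iff_continuousAt.2 fun X => (exp_analytic (𝕂 := ℂ) X).continuousAt).comp
        (continuous_id.smul continuous_const)).norm
    exact hcont.continuousOn.le_sSup_image_Icc ⟨by positivity, by gcongr⟩
  have hcomm : Commute δ (exp (h • A)) := by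
    have : Commute (h • A) V := hV ▸ Commute.sum_right _ _ _ fun k _ =>
      ((Commute.refl _).pow_right k).smul_right _
    exact hδ ▸ this.symm.exp_right.sub_left (Commute.refl _)
  have hM : 0 ≤ M := (norm_nonneg _).trans (hpow 0 hm.le)
  calc ‖V ^ m - exp ((m * h) • A)‖ = ‖(δ + exp (h • A)) ^ m - exp (h • A) ^ m‖ := by
        rw [hδ, sub_add_cancel, ← Matrix.exp_nsmul, ← Nat.cast_smul_eq_nsmul ℝ, smul_smul]
    _ ≤ ((1 + ‖δ‖) ^ m - 1) * M := norm_add_pow_sub_pow_le hcomm fun j hj => hpow j hj.le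
    _ ≤ m * ‖δ‖ * Real.exp (m * ‖δ‖) * M := by
        gcongr; exact one_add_pow_sub_one_le (norm_nonneg δ) m
    _ ≤ 2 * Real.exp 1 * (m * ‖δ‖ * Real.exp (m * ‖δ‖) * M) :=
        le_mul_of_one_le_left (mul_nonneg (by positivity) hM)
          (by linarith [Real.add_one_le_exp 1])
    _ = 2 * Real.exp 1 * m * Real.exp (m * ‖δ‖) * M * ‖δ‖ := by ring
end

section
/- Let A, B, C ∈ ℂ^{N×N}, h ≤ min{1/‖A‖, 1/‖B‖}, I_C = ∫₀ʰ e^{(h−τ)A†} C e^{(h−τ)B} dτ, and define the truncated approximation Ĩ_C = Σ_{p,q=0}^{K} (A†)^p C B^q /(p! q!) · h^{p+q+1}/(p+q+1). Then ‖I_C − Ĩ_C‖ ≤ 2 e² ‖C‖ h / (K+1)!. -/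
/-!
Write `T_K = expTaylor K` for the degree-`K` Taylor polynomial of `exp`. The truncated integrand
`T_K((h-τ)A†) C T_K((h-τ)B)` integrates term by term to `Ĩ_C`, so `I_C - Ĩ_C` is the integral over
`[0, h]` of `e^{sA†} C e^{sB} - T_K(sA†) C T_K(sB)` with `s = h - τ`. Splitting this as
`(e^{sA†} - T_K(sA†)) C e^{sB} + T_K(sA†) C (e^{sB} - T_K(sB))`, the two Taylor remainders have norm
at most `e/(K+1)!`, while `e^{sB}` and `T_K(sA†)` have norm at most `e`, because `‖sA†‖, ‖sB‖ ≤ 1`.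
-/

open scoped Matrix.Norms.L2Operator Nat
open NormedSpace Matrix Finset

lemma hasSum_inv_factorial : HasSum (fun n : ℕ => (n !⁻¹ : ℝ)) (Real.exp 1) := by
  simpa [Real.exp_eq_exp_ℝ] using exp_series_hasSum_exp' (𝕂 := ℝ) (1 : ℝ)

lemma inv_factorial_add_le (m n : ℕ) : ((n + m)! : ℝ)⁻¹ ≤ (m ! : ℝ)⁻¹ * (n ! : ℝ)⁻¹ := by
  rw [← mul_inv]
  refine inv_anti₀ (by positivity) ?_
  rw [add_comm]
  exact_mod_cast Nat.le_of_dvd (Nat.factorial_pos _)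
    (Nat.factorial_mul_factorial_dvd_factorial_add m n)

lemma integral_sub_pow (h : ℝ) (n : ℕ) :
    ∫ τ in (0 : ℝ)..h, (h - τ) ^ n = h ^ (n + 1) / (n + 1) := by
  simp [intervalIntegral.integral_comp_sub_left (fun x => x ^ n) h, integral_pow]

section Taylor

variable {𝔸 : Type*} [NormedRing 𝔸]

lemma norm_pow_le_one_of_norm_le_one (h1 : ‖(1 : 𝔸)‖ ≤ 1) {x : 𝔸} (hx : ‖x‖ ≤ 1) :
    ∀ n : ℕ, ‖x ^ n‖ ≤ 1
  | 0 => by simpa using h1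
  | n + 1 => (norm_pow_le' x n.succ_pos).trans (pow_le_one₀ (norm_nonneg x) hx)

variable [NormedAlgebra ℝ 𝔸]

noncomputable def expTaylor (K : ℕ) (x : 𝔸) : 𝔸 :=
  ∑ n ∈ range (K + 1), (n !⁻¹ : ℝ) • x ^ n

@[fun_prop]
lemma continuous_expTaylor (K : ℕ) : Continuous (expTaylor K : 𝔸 → 𝔸) := by
  unfold expTaylor
  fun_prop

lemma expTaylor_smul (K : ℕ) (s : ℝ) (x : 𝔸) :
    expTaylor K (s • x) = ∑ n ∈ range (K + 1), (s ^ n / n !) • x ^ n := by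
  refine sum_congr rfl fun n _ => ?_
  rw [smul_pow, smul_smul, inv_mul_eq_div]

lemma norm_inv_factorial_smul_le (n : ℕ) {y : 𝔸} (hy : ‖y‖ ≤ 1) :
    ‖(n !⁻¹ : ℝ) • y‖ ≤ (n ! : ℝ)⁻¹ := by
  rw [norm_smul, Real.norm_of_nonneg (by positivity)]
  exact mul_le_of_le_one_right (by positivity) hy

lemma expTaylor_smul_mul_mul_expTaylor_smul (K : ℕ) (s : ℝ) (a c b : 𝔸) :
    expTaylor K (s • a) * c * expTaylor K (s • b) = ∑ p ∈ range (K + 1), ∑ q ∈ range (K + 1),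
      (s ^ (p + q) / (p ! * q !)) • (a ^ p * c * b ^ q) := by
  rw [expTaylor_smul, expTaylor_smul, sum_mul, sum_mul]
  refine sum_congr rfl fun p _ => ?_
  rw [mul_sum]
  refine sum_congr rfl fun q _ => ?_
  rw [smul_mul_assoc, smul_mul_assoc, mul_smul_comm, smul_smul, pow_add]
  congr 1
  field_simp

lemma norm_expTaylor_le (h1 : ‖(1 : 𝔸)‖ ≤ 1) {x : 𝔸} (hx : ‖x‖ ≤ 1) (K : ℕ) :
    ‖expTaylor K x‖ ≤ Real.exp 1 :=
  calc ‖expTaylor K x‖ ≤ ∑ n ∈ range (K + 1), (n !⁻¹ : ℝ) :=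
        norm_sum_le_of_le _ fun n _ =>
          norm_inv_factorial_smul_le n (norm_pow_le_one_of_norm_le_one h1 hx n)
    _ ≤ Real.exp 1 := sum_le_hasSum _ (fun n _ => by positivity) hasSum_inv_factorial

variable [CompleteSpace 𝔸]

lemma norm_exp_le_exp_one (h1 : ‖(1 : 𝔸)‖ ≤ 1) {x : 𝔸} (hx : ‖x‖ ≤ 1) :
    ‖exp x‖ ≤ Real.exp 1 :=
  (exp_series_hasSum_exp' (𝕂 := ℝ) x).norm_le_of_bounded hasSum_inv_factorial fun n =>
    norm_inv_factorial_smul_le n (norm_pow_le_one_of_norm_le_one h1 hx n)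

lemma exp_sub_expTaylor (K : ℕ) (x : 𝔸) :
    exp x - expTaylor K x = ∑' n, ((n + (K + 1))! ⁻¹ : ℝ) • x ^ (n + (K + 1)) := by
  rw [← (exp_series_hasSum_exp' (𝕂 := ℝ) x).tsum_eq,
    ← (expSeries_summable' (𝕂 := ℝ) x).sum_add_tsum_nat_add (K + 1), expTaylor, add_sub_cancel_left]

lemma norm_exp_sub_expTaylor_le {x : 𝔸} (hx : ‖x‖ ≤ 1) (K : ℕ) :
    ‖exp x - expTaylor K x‖ ≤ Real.exp 1 / (K + 1)! := by
  rw [exp_sub_expTaylor, div_eq_inv_mul]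
  refine tsum_of_norm_bounded (hasSum_inv_factorial.mul_left _) fun n => ?_
  have hpow : ‖x ^ (n + (K + 1))‖ ≤ 1 :=
    (norm_pow_le' x (by omega)).trans (pow_le_one₀ (norm_nonneg x) hx)
  exact (norm_inv_factorial_smul_le _ hpow).trans (inv_factorial_add_le _ _)

lemma norm_exp_mul_mul_exp_sub_expTaylor_le (h1 : ‖(1 : 𝔸)‖ ≤ 1) {x y : 𝔸} (hx : ‖x‖ ≤ 1)
    (hy : ‖y‖ ≤ 1) (c : 𝔸) (K : ℕ) :
    ‖exp x * c * exp y - expTaylor K x * c * expTaylor K y‖ ≤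
      2 * Real.exp 1 ^ 2 * ‖c‖ / (K + 1)! := by
  have hsplit : exp x * c * exp y - expTaylor K x * c * expTaylor K y =
      (exp x - expTaylor K x) * c * exp y + expTaylor K x * c * (exp y - expTaylor K y) := by
    noncomm_ring
  rw [hsplit]
  calc _ ≤ ‖exp x - expTaylor K x‖ * ‖c‖ * ‖exp y‖ +
        ‖expTaylor K x‖ * ‖c‖ * ‖exp y - expTaylor K y‖ :=
        norm_add_le_of_le norm_mul₃_le norm_mul₃_le
    _ ≤ Real.exp 1 / (K + 1)! * ‖c‖ * Real.exp 1 +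
        Real.exp 1 * ‖c‖ * (Real.exp 1 / (K + 1)!) := by
        gcongr
        exacts [norm_exp_sub_expTaylor_le hx K, norm_exp_le_exp_one h1 hy,
          norm_expTaylor_le h1 hx K, norm_exp_sub_expTaylor_le hy K]
    _ = 2 * Real.exp 1 ^ 2 * ‖c‖ / (K + 1)! := by ring

end Taylor

section Integral

variable {𝔸 : Type*} [NormedRing 𝔸] [NormedAlgebra ℝ 𝔸] [CompleteSpace 𝔸]

@[fun_prop]
lemma Continuous.exp_smul {α : Type*} [TopologicalSpace α] {f : α → ℝ} (hf : Continuous f)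
    (x : 𝔸) : Continuous fun t => exp (f t • x) :=
  (continuous_iff_continuousAt.2 fun s => (hasDerivAt_exp_smul_const x s).continuousAt).comp hf

lemma integral_expTaylor_mul_mul_expTaylor (K : ℕ) (h : ℝ) (a c b : 𝔸) :
    ∫ τ in (0 : ℝ)..h, expTaylor K ((h - τ) • a) * c * expTaylor K ((h - τ) • b) =
      ∑ p ∈ range (K + 1), ∑ q ∈ range (K + 1),
        (h ^ (p + q + 1) / ((p + q + 1) * p ! * q !) : ℝ) • (a ^ p * c * b ^ q) := by
  simp_rw [expTaylor_smul_mul_mul_expTaylor_smul]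
  rw [intervalIntegral.integral_finsetSum fun p _ =>
    (by fun_prop : Continuous _).intervalIntegrable _ _]
  refine sum_congr rfl fun p _ => ?_
  rw [intervalIntegral.integral_finsetSum fun q _ =>
    (by fun_prop : Continuous _).intervalIntegrable _ _]
  refine sum_congr rfl fun q _ => ?_
  rw [intervalIntegral.integral_smul_const, intervalIntegral.integral_div, integral_sub_pow]
  congr 1
  push_cast
  field_simp

end Integral

/-- **Truncated Taylor series approximation to the short-time integral `I_C`.**
Let `A, B, C ∈ ℂ^{N×N}` and `h > 0` with `h·‖A‖ ≤ 1` and `h·‖B‖ ≤ 1`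
(i.e. `h ≤ min{1/‖A‖, 1/‖B‖}`).  With
`I_C = ∫₀ʰ e^{(h−τ)A†} C e^{(h−τ)B} dτ` and
`Ĩ_C = Σ_{p,q=0}^{K} (A†)^p C B^q/(p!·q!) · h^{p+q+1}/(p+q+1)`, we have
`‖I_C − Ĩ_C‖ ≤ 2 e² ‖C‖ h / (K+1)!`. -/
theorem truncated_IC_error
    (N : ℕ) (A B C : Matrix (Fin N) (Fin N) ℂ) (h : ℝ) (hh : 0 < h)
    (hA : h * ‖A‖ ≤ 1) (hB : h * ‖B‖ ≤ 1) (K : ℕ)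
    (IC ICtilde : Matrix (Fin N) (Fin N) ℂ)
    (hIC : IC = ∫ τ in (0:ℝ)..h, NormedSpace.exp ((h - τ) • Aᴴ) * C * NormedSpace.exp ((h - τ) • B))
    (hICt : ICtilde = ∑ p ∈ Finset.range (K + 1), ∑ q ∈ Finset.range (K + 1),
      (h ^ (p + q + 1) / ((p + q + 1) * p.factorial * q.factorial) : ℝ) •
        (Aᴴ ^ p * C * B ^ q)) :
    ‖IC - ICtilde‖ ≤ 2 * Real.exp 1 ^ 2 * ‖C‖ * h / (K + 1).factorial := by
  subst hIC hICt
  -- not `NormOneClass`: for `N = 0` the norm of `1` is `0`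
  have h1 : ‖(1 : Matrix (Fin N) (Fin N) ℂ)‖ ≤ 1 := by
    rw [cstar_norm_def, map_one, ContinuousLinearMap.one_def]
    exact ContinuousLinearMap.norm_id_le
  have hscaled : ∀ {x : Matrix (Fin N) (Fin N) ℂ}, h * ‖x‖ ≤ 1 →
      ∀ τ ∈ Set.uIoc 0 h, ‖(h - τ) • x‖ ≤ 1 := by
    intro x hx τ hτ
    rw [Set.uIoc_of_le hh.le] at hτ
    rw [norm_smul, Real.norm_of_nonneg (by linarith [hτ.2])]
    nlinarith [norm_nonneg x, hτ.1]
  rw [← integral_expTaylor_mul_mul_expTaylor, ← intervalIntegral.integral_sub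
    ((by fun_prop : Continuous _).intervalIntegrable _ _)
    ((by fun_prop : Continuous _).intervalIntegrable _ _)]
  calc _ ≤ 2 * Real.exp 1 ^ 2 * ‖C‖ / (K + 1)! * |h - 0| :=
        intervalIntegral.norm_integral_le_of_norm_le_const fun τ hτ =>
          norm_exp_mul_mul_exp_sub_expTaylor_le h1
            (hscaled (by rwa [l2_opNorm_conjTranspose]) τ hτ) (hscaled hB τ hτ) C K
    _ = 2 * Real.exp 1 ^ 2 * ‖C‖ * h / (K + 1)! := by
        rw [sub_zero, abs_of_pos hh]
        ring
end

section
/- Let 0 < δ ≤ π/16 and t > 0 with t ≤ 1/sin(2δ), and set L(θ) = (1 − e^{−t sin θ})/sin θ. Then L(δ) − L(2δ) ≥ t²(sin(2δ)/e − sin(δ)/2), and moreover L(δ) − L(2δ) ≥ (1/5)·sin(δ)·L(δ)². -/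
/-!
Since `1 - x + x²/e ≤ e^{-x} ≤ 1 - x + x²/2` (the left bound for `0 ≤ x ≤ 1`, which is where
`t sin 2δ ≤ 1` enters), `L δ ≥ t - t² sin δ / 2` and `L (2δ) ≤ t - t² sin 2δ / e`; subtracting gives
the first inequality. For the second, `0 ≤ L δ ≤ t`, and `cos δ ≥ 0.98` makes
`sin 2δ / e - sin δ / 2 = (2 cos δ / e - 1/2) sin δ` at least `sin δ / 5`.
-/

open Real Set

lemma Real.exp_neg_le_one_sub_add_sq_div_two {x : ℝ} (hx : 0 ≤ x) :
    exp (-x) ≤ 1 - x + x ^ 2 / 2 := by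
  -- `(1 - x + x²/2)(1 + x + x²/2) = 1 + x⁴/4`
  have key : 1 ≤ (1 - x + x ^ 2 / 2) * exp x :=
    calc 1 ≤ (1 - x + x ^ 2 / 2) * (1 + x + x ^ 2 / 2) := by nlinarith [pow_nonneg hx 4]
      _ ≤ (1 - x + x ^ 2 / 2) * exp x := by
        gcongr
        · nlinarith [sq_nonneg (x - 1)]
        · exact quadratic_le_exp_of_nonneg hx
  rw [exp_neg, inv_le_iff_one_le_mul₀ (exp_pos x)]
  linarith

lemma hasDerivAt_exp_mul_one_sub_add_sq_div_exp_one (y : ℝ) :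
    HasDerivAt (fun z ↦ exp z * (1 - z + z ^ 2 / exp 1))
      (y * exp (y - 1) * (y - (exp 1 - 2))) y := by
  refine ((hasDerivAt_exp y).mul
    (((hasDerivAt_id' y).const_sub 1).add ((hasDerivAt_pow 2 y).div_const (exp 1)))).congr_deriv ?_
  simp only [Pi.add_apply, exp_sub]
  field_simp
  ring

lemma Real.one_sub_add_sq_div_exp_one_le_exp_neg {x : ℝ} (hx₀ : 0 ≤ x) (hx₁ : x ≤ 1) :
    1 - x + x ^ 2 / exp 1 ≤ exp (-x) := by
  set F : ℝ → ℝ := fun z ↦ exp z * (1 - z + z ^ 2 / exp 1)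
  have hF := hasDerivAt_exp_mul_one_sub_add_sq_div_exp_one
  have he₂ : 2 < exp 1 := by linarith [exp_one_gt_d9]
  have he₃ : exp 1 < 3 := by linarith [exp_one_lt_d9]
  have hdiff : Differentiable ℝ F := fun y ↦ (hF y).differentiableAt
  -- `F 0 = F 1 = 1`, and `F` decreases and then increases on `[0, 1]`
  have anti : AntitoneOn F (Icc 0 (exp 1 - 2)) := by
    refine antitoneOn_of_deriv_nonpos (convex_Icc _ _) hdiff.continuous.continuousOn
      hdiff.differentiableOn fun y hy ↦ ?_
    rw [interior_Icc] at hy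
    rw [(hF y).deriv]
    exact mul_nonpos_of_nonneg_of_nonpos (by positivity [hy.1.le]) (by linarith [hy.2])
  have mono : MonotoneOn F (Icc (exp 1 - 2) 1) := by
    refine monotoneOn_of_deriv_nonneg (convex_Icc _ _) hdiff.continuous.continuousOn
      hdiff.differentiableOn fun y hy ↦ ?_
    rw [interior_Icc] at hy
    rw [(hF y).deriv]
    exact mul_nonneg (mul_nonneg (by linarith [hy.1]) (exp_pos _).le) (by linarith [hy.1])
  have hF₁ : F x ≤ 1 := by
    rcases le_total x (exp 1 - 2) with h | h
    · simpa [F] using anti ⟨le_rfl, by linarith⟩ ⟨hx₀, h⟩ hx₀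
    · simpa [F] using mono ⟨h, hx₁⟩ ⟨by linarith, le_rfl⟩ hx₁
  rw [exp_neg, ← one_div, le_div_iff₀ (exp_pos x), mul_comm]
  exact hF₁

section OneSubExpNegDiv

variable {s t : ℝ}

lemma one_sub_exp_neg_mul_div_le (hs : 0 < s) : (1 - exp (-(t * s))) / s ≤ t := by
  rw [div_le_iff₀ hs]
  linarith [add_one_le_exp (-(t * s))]

lemma one_sub_exp_neg_mul_div_nonneg (hs : 0 ≤ s) (ht : 0 ≤ t) :
    0 ≤ (1 - exp (-(t * s))) / s :=
  div_nonneg (sub_nonneg.2 (exp_le_one_iff.2 (by simpa using mul_nonneg ht hs))) hs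

lemma sub_sq_mul_div_two_le_one_sub_exp_neg_mul_div (hs : 0 < s) (ht : 0 ≤ t) :
    t - t ^ 2 * s / 2 ≤ (1 - exp (-(t * s))) / s := by
  rw [le_div_iff₀ hs]
  nlinarith [exp_neg_le_one_sub_add_sq_div_two (mul_nonneg ht hs.le)]

lemma one_sub_exp_neg_mul_div_le_sub_sq_mul_div_exp_one (hs : 0 < s) (ht : 0 ≤ t)
    (hts : t * s ≤ 1) : (1 - exp (-(t * s))) / s ≤ t - t ^ 2 * s / exp 1 := by
  have h := one_sub_add_sq_div_exp_one_le_exp_neg (mul_nonneg ht hs.le) hts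
  rw [div_le_iff₀ hs]
  calc 1 - exp (-(t * s)) ≤ t * s - (t * s) ^ 2 / exp 1 := by linarith
    _ = (t - t ^ 2 * s / exp 1) * s := by ring

end OneSubExpNegDiv

lemma sin_div_five_le_sin_two_mul_div_exp_one_sub {δ : ℝ} (hδ : 0 < δ) (hδ' : δ ≤ π / 16) :
    sin δ / 5 ≤ sin (2 * δ) / exp 1 - sin δ / 2 := by
  have hsin : 0 < sin δ := sin_pos_of_pos_of_lt_pi hδ (by linarith [pi_pos])
  have hcos : 0.98 ≤ cos δ := by
    nlinarith [one_sub_sq_div_two_le_cos (x := δ), pi_lt_d2]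
  have he : exp 1 < 2.7182818286 := exp_one_lt_d9
  rw [sin_two_mul, le_sub_iff_add_le, le_div_iff₀ (exp_pos 1)]
  nlinarith [mul_le_mul_of_nonneg_left hcos hsin.le]

/-- **Gap bound for `L(θ)` in the regime `t ≤ 1/sin(2δ)`.**
For `0 < δ ≤ π/16` and `0 < t` with `t·sin(2δ) ≤ 1` (i.e. `t ≤ 1/sin(2δ)`), the
function `L(θ) = (1 − e^{−t·sin θ})/sin θ` satisfies
`L(δ) − L(2δ) ≥ t²(sin(2δ)/e − sin(δ)/2)` and
`L(δ) − L(2δ) ≥ (1/5)·sin(δ)·L(δ)²`. -/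
theorem L_gap_small_t
    (δ t : ℝ) (hδ : 0 < δ) (hδ' : δ ≤ Real.pi / 16) (ht : 0 < t)
    (htδ : t * Real.sin (2 * δ) ≤ 1)
    (L : ℝ → ℝ)
    (hL : ∀ θ : ℝ, L θ = (1 - Real.exp (-(t * Real.sin θ))) / Real.sin θ) :
    L δ - L (2 * δ) ≥
        t ^ 2 * (Real.sin (2 * δ) / Real.exp 1 - Real.sin δ / 2) ∧
      L δ - L (2 * δ) ≥ (1 / 5) * Real.sin δ * (L δ) ^ 2 := by
  have hsin : 0 < sin δ := sin_pos_of_pos_of_lt_pi hδ (by linarith [pi_pos])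
  have hsin₂ : 0 < sin (2 * δ) := sin_pos_of_pos_of_lt_pi (by positivity) (by linarith [pi_pos])
  have hlow : t - t ^ 2 * sin δ / 2 ≤ L δ :=
    hL δ ▸ sub_sq_mul_div_two_le_one_sub_exp_neg_mul_div hsin ht.le
  have hup : L (2 * δ) ≤ t - t ^ 2 * sin (2 * δ) / exp 1 :=
    hL (2 * δ) ▸ one_sub_exp_neg_mul_div_le_sub_sq_mul_div_exp_one hsin₂ ht.le htδ
  have hgap : t ^ 2 * (sin (2 * δ) / exp 1 - sin δ / 2) ≤ L δ - L (2 * δ) :=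
    calc _ = (t - t ^ 2 * sin δ / 2) - (t - t ^ 2 * sin (2 * δ) / exp 1) := by ring
      _ ≤ L δ - L (2 * δ) := by linarith
  refine ⟨hgap, ?_⟩
  have hLδ : L δ ^ 2 ≤ t ^ 2 := by
    rw [hL]
    exact pow_le_pow_left₀ (one_sub_exp_neg_mul_div_nonneg hsin.le ht.le)
      (one_sub_exp_neg_mul_div_le hsin) 2
  calc 1 / 5 * sin δ * L δ ^ 2 ≤ t ^ 2 * (sin δ / 5) := by nlinarith
    _ ≤ t ^ 2 * (sin (2 * δ) / exp 1 - sin δ / 2) :=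
      mul_le_mul_of_nonneg_left (sin_div_five_le_sin_two_mul_div_exp_one_sub hδ hδ') (sq_nonneg t)
    _ ≤ L δ - L (2 * δ) := hgap
end
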